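/- arXiv:2506.19881 — 3 statements merged into one kernel-verified Lean document; each statement's English description precedes it below -/
import Mathlib

section
/- Fix reals 0 < β < 1 and 0 < κ ≤ 0.99, integers n ≥ 1 and m ≥ n/β. Suppose there exist pairwise distinct works w_{i,j} ∈ W (i ∈ [m], j ∈ [n]) such that for all i ≠ i' ∈ [m] and all j ∈ [n]: ideas(w_{i,j}) = ideas(w_{i',j}) and SubSim(w_{i,j}) ∩ SubSim(w_{i',j}) = ∅. If a training algorithm Train is tainted with respect to ideas, then Train is not (κ,β)-clean: there exist a reflexive copyright dependency graph, a set C ⊆ W, a dataset D, a user u that is β-blameless with respect to D, C, Train (and this graph), and an auxiliary input aux such that τ(SubSim(C); aux) > 0.99 ≥ κ. -/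
open scoped ENNReal

/-- Scrubbing: remove from `D` every work stemming from `c`
(w.r.t. the copyright dependency graph `E`, where `E c w` means "`w` stems from `c`"). -/
noncomputable def scrub {W : Type*} (E : W → W → Prop) (D : List W) (c : W) : List W :=
  D.filter fun w => @decide (¬ E c w) (Classical.propDecidable _)

/-- `C_D`: the in-copyright works from which some element of `D` stems. -/
def CD {W : Type*} (E : W → W → Prop) (C : Set W) (D : List W) : Set W :=
  {c ∈ C | ∃ w ∈ D, E c w}

/-- `C_{-D} = C \ C_D`. -/
def CmD {W : Type*} (E : W → W → Prop) (C : Set W) (D : List W) : Set W :=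
  C \ CD E C D

/-- `SubSim(S) = ⋃_{w ∈ S} SubSim(w)`. -/
def SubSimSet {W : Type*} (SubSim : W → Set W) (S : Set W) : Set W :=
  ⋃ w ∈ S, SubSim w

/-- The user's output distribution `τ(·; aux)`: sample a model `p ← Train(D)`, then
sample `z ← u(p, aux)`. -/
noncomputable def tau {W X A : Type*} (Train : List W → PMF (X → PMF W))
    (u : (X → PMF W) → A → PMF W) (D : List W) (aux : A) : PMF W :=
  (Train D).bind fun p => u p aux

/-- `Train` is tainted w.r.t. `ideas` (and `SubSim`) if some fixed user copies for
every dataset `D` and every `w ∈ D`: `τ(SubSim(D); ideas w) > 0.99`. -/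
def Tainted {W X A : Type*} (Train : List W → PMF (X → PMF W))
    (ideas : W → A) (SubSim : W → Set W) : Prop :=
  ∃ u : (X → PMF W) → A → PMF W, ∀ D : List W, ∀ w ∈ D,
    (99 / 100 : ℝ≥0∞) <
      (tau Train u D (ideas w)).toOuterMeasure (SubSimSet SubSim {v | v ∈ D})

/-- A user `u` is `β`-blameless in the clean room w.r.t. `D`, `C`, `Train` (and the
graph `E`): for every `c ∈ C` and every `aux`, the clean-room output distribution
`τ_{-c}` (the model trained on `scrub(D, c)`) puts mass at most `β` on
`SubSim(C_{-D} ∪ {c})`. -/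
def Blameless {W X A : Type*} (β : ℝ≥0∞) (Train : List W → PMF (X → PMF W))
    (u : (X → PMF W) → A → PMF W) (E : W → W → Prop) (C : Set W) (D : List W)
    (SubSim : W → Set W) : Prop :=
  ∀ c ∈ C, ∀ aux : A,
    (tau Train u (scrub E D c) aux).toOuterMeasure
      (SubSimSet SubSim (CmD E C D ∪ {c})) ≤ β

/-- Neighboring datasets: they differ by inserting or deleting a single element. -/
def Neighboring {W : Type*} (D D' : List W) : Prop :=
  (∃ (l1 l2 : List W) (a : W), D = l1 ++ l2 ∧ D' = l1 ++ a :: l2) ∨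
  (∃ (l1 l2 : List W) (a : W), D' = l1 ++ l2 ∧ D = l1 ++ a :: l2)

/-- `(ε,δ)`-differential privacy of a training algorithm. -/
def DP {W M : Type*} (Train : List W → PMF M) (ε : ℝ) (δ : ℝ≥0∞) : Prop :=
  ∀ D D' : List W, Neighboring D D' → ∀ S : Set M,
    (Train D).toOuterMeasure S ≤
      ENNReal.ofReal (Real.exp ε) * (Train D').toOuterMeasure S + δ

/-- A dataset is golden w.r.t. the graph `E` and in-copyright works `C` if for every
`c ∈ C` at most one element of `D` (counted with multiplicity) stems from `c`. -/
def Golden {W : Type*} (E : W → W → Prop) (C : Set W) (D : List W) : Prop :=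
  ∀ c ∈ C, ∀ (i j : Fin D.length), E c (D.get i) → E c (D.get j) → i = j

/-!
Take equality as the dependency graph and let `a` be the common idea of a column `j₀`. The
substantially-similar sets of the `m` works in that column are disjoint, so the copying
user's output distribution on the empty dataset with input `a` gives one of them, that of
`c = w i j₀` say, mass at most `1 / m ≤ β`. This is exactly the clean-room mass for
`C = {c}`, `D = [c]`, since scrubbing `c` from `[c]` leaves nothing, while taint makes the
same user copy `c` from `D = [c]` with probability above `0.99`.
-/

namespace PMF

open Function

variable {α ι : Type*}

theorem sum_toOuterMeasure_le_one (p : PMF α) {s : Finset ι} {f : ι → Set α}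
    (hf : (s : Set ι).PairwiseDisjoint f) : ∑ i ∈ s, p.toOuterMeasure (f i) ≤ 1 := by
  let _ : MeasurableSpace α := ⊤
  simp_rw [← p.toMeasure_apply_eq_toOuterMeasure]
  rw [← MeasureTheory.measure_biUnion_finset hf fun _ _ => MeasurableSpace.measurableSet_top]
  exact MeasureTheory.prob_le_one

theorem exists_toOuterMeasure_le_of_pairwise_disjoint [Fintype ι] (p : PMF α) {f : ι → Set α}
    (hf : Pairwise (Disjoint on f)) {β : ℝ≥0∞} (hβ : 1 ≤ Fintype.card ι * β) :
    ∃ i, p.toOuterMeasure (f i) ≤ β := by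
  have hι : (Finset.univ : Finset ι).Nonempty := Finset.univ_nonempty_iff.mpr <|
    Fintype.card_pos_iff.mp <| Nat.pos_of_ne_zero fun h => by simp [h] at hβ
  have hsum : ∑ i, p.toOuterMeasure (f i) ≤ ∑ _i : ι, β := by
    rw [Finset.sum_const, Finset.card_univ, nsmul_eq_mul]
    exact (p.sum_toOuterMeasure_le_one fun i _ j _ hij => hf hij).trans hβ
  obtain ⟨i, -, hi⟩ := ENNReal.exists_le_of_sum_le hι hsum
  exact ⟨i, hi⟩

end PMF

section SingletonCopyright

variable {W X A : Type*} (Train : List W → PMF (X → PMF W)) (SubSim : W → Set W)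

@[simp]
theorem subSimSet_singleton (c : W) : SubSimSet SubSim {c} = SubSim c :=
  Set.biUnion_singleton c SubSim

theorem scrub_eq_singleton_self (c : W) : scrub Eq [c] c = [] := by
  simp [scrub]

theorem blameless_eq_singleton_iff (β : ℝ≥0∞) (u : (X → PMF W) → A → PMF W) (c : W) :
    Blameless β Train u Eq {c} [c] SubSim ↔
      ∀ aux, (tau Train u [] aux).toOuterMeasure (SubSim c) ≤ β := by
  have hC : CmD Eq {c} [c] ∪ {c} = ({c} : Set W) :=
    Set.union_eq_self_of_subset_left Set.sdiff_subset
  simp only [Blameless, Set.mem_singleton_iff, forall_eq, scrub_eq_singleton_self, hC,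
    subSimSet_singleton]

theorem Tainted.exists_copying_user {ideas : W → A} (h : Tainted Train ideas SubSim) :
    ∃ u : (X → PMF W) → A → PMF W, ∀ c,
      99 / 100 < (tau Train u [c] (ideas c)).toOuterMeasure (SubSim c) := by
  obtain ⟨u, hu⟩ := h
  refine ⟨u, fun c => ?_⟩
  simpa using hu [c] c (List.mem_singleton_self c)

end SingletonCopyright

theorem tainted_not_clean_general {W X A : Type*}
    (ideas : W → A) (SubSim : W → Set W)
    (β κ : ℝ≥0∞) (hβ1 : β < 1) (hκ : κ ≤ 99 / 100)
    (n m : ℕ) (hn : 1 ≤ n) (hm : (n : ℝ≥0∞) / β ≤ (m : ℝ≥0∞))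
    (w : Fin m → Fin n → W)
    (hwideas : ∀ (i i' : Fin m) (j : Fin n), i ≠ i' → ideas (w i j) = ideas (w i' j))
    (hwdisj : ∀ (i i' : Fin m) (j : Fin n), i ≠ i' →
      SubSim (w i j) ∩ SubSim (w i' j) = ∅)
    (Train : List W → PMF (X → PMF W))
    (htainted : Tainted Train ideas SubSim) :
    ∃ (E : W → W → Prop) (_ : ∀ v, E v v) (C : Set W) (D : List W)
      (u : (X → PMF W) → A → PMF W) (aux : A),
      Blameless β Train u E C D SubSim ∧
      (99 / 100 : ℝ≥0∞) < (tau Train u D aux).toOuterMeasure (SubSimSet SubSim C) ∧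
      κ ≤ 99 / 100 := by
  obtain ⟨u, hu⟩ := htainted.exists_copying_user
  have hmβ : 1 ≤ (m : ℝ≥0∞) * β := (Nat.one_le_cast.mpr hn).trans <|
    (ENNReal.div_le_iff_le_mul (.inr (ENNReal.natCast_ne_top m)) (.inl hβ1.ne_top)).mp hm
  let i₀ : Fin m := ⟨0, Nat.pos_of_ne_zero fun h => by simp [h] at hmβ⟩
  let j₀ : Fin n := ⟨0, hn⟩
  let a := ideas (w i₀ j₀)
  have hideas : ∀ i, ideas (w i j₀) = a := fun i =>
    (eq_or_ne i i₀).elim (fun h => h ▸ rfl) (hwideas i i₀ j₀)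
  obtain ⟨i, hi⟩ := (tau Train u [] a).exists_toOuterMeasure_le_of_pairwise_disjoint
    (f := fun i => SubSim (w i j₀))
    (fun i i' h => Set.disjoint_iff_inter_eq_empty.mpr (hwdisj i i' j₀ h))
    (by simpa using hmβ)
  refine ⟨Eq, fun _ => rfl, {w i j₀}, [w i j₀], fun p _ => u p a, a,
    (blameless_eq_singleton_iff Train SubSim β _ _).mpr fun _ => hi, ?_, hκ⟩
  rw [subSimSet_singleton]
  exact hideas i ▸ hu (w i j₀)

/-- under the combinatorial richness assumption on works
(`m × n` pairwise-distinct works with columnwise-equal ideas and columnwise-disjoint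
substantial-similarity sets, `m ≥ n/β`), any training algorithm `Train` that is
tainted w.r.t. `ideas` is not `(κ,β)`-clean: there are a reflexive dependency graph,
a set `C`, a dataset `D`, a `β`-blameless user `u`, and an `aux` such that
`τ(SubSim(C); aux) > 0.99 ≥ κ`. -/
theorem tainted_not_clean {W X A : Type*} [Countable W]
    (ideas : W → A) (SubSim : W → Set W) (hrefl : ∀ v, v ∈ SubSim v)
    (β κ : ℝ≥0∞) (hβ0 : 0 < β) (hβ1 : β < 1) (hκ0 : 0 < κ) (hκ : κ ≤ 99 / 100)
    (n m : ℕ) (hn : 1 ≤ n) (hm : (n : ℝ≥0∞) / β ≤ (m : ℝ≥0∞))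
    (w : Fin m → Fin n → W)
    (hwinj : Function.Injective fun q : Fin m × Fin n => w q.1 q.2)
    (hwideas : ∀ (i i' : Fin m) (j : Fin n), i ≠ i' → ideas (w i j) = ideas (w i' j))
    (hwdisj : ∀ (i i' : Fin m) (j : Fin n), i ≠ i' →
      SubSim (w i j) ∩ SubSim (w i' j) = ∅)
    (Train : List W → PMF (X → PMF W))
    (htainted : Tainted Train ideas SubSim) :
    ∃ (E : W → W → Prop) (_ : ∀ v, E v v) (C : Set W) (D : List W)
      (u : (X → PMF W) → A → PMF W) (aux : A),
      Blameless β Train u E C D SubSim ∧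
      (99 / 100 : ℝ≥0∞) < (tau Train u D aux).toOuterMeasure (SubSimSet SubSim C) ∧
      κ ≤ 99 / 100 :=
  tainted_not_clean_general ideas SubSim β κ hβ1 hκ n m hn hm w hwideas hwdisj Train htainted
end

section
/- Fix a real 0 < β < 1, integers n ≥ 1 and m ≥ n/β, and pairwise distinct works w_{i,j} ∈ W (i ∈ [m], j ∈ [n]) such that SubSim(w_{i,j}) ∩ SubSim(w_{i',j}) = ∅ for all i ≠ i' ∈ [m] and all j ∈ [n]. Take the copyright dependency graph to be the identity relation on W (so scrub(D,c) removes exactly the occurrences of c from D). For x ∈ [m]^n let D^(x) be the dataset (w_{x_1,1}, …, w_{x_n,n}). Let u be a user that ignores its auxiliary input (u(p, aux) = u(p, ⊥) for all aux). Then for every training algorithm Train there exists x ∈ [m]^n such that u is β-blameless with respect to the dataset D^(x), the set C = D^(x), and Train. -/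
open scoped ENNReal

/-! With the identity graph, scrubbing `w_{x_j,j}` from `D^(x)` deletes exactly the `j`-th entry,
so the clean-room distribution `μ` for coordinate `j` does not depend on `x_j`. Since the sets
`SubSim(w_{i,j})`, `i ∈ [m]`, are pairwise disjoint, `μ` gives mass `> β` to fewer than
`1/β ≤ m/n` of them: fewer than a `1/n` fraction of all `x` are bad at `j`, and a union bound
over the `n` coordinates leaves an `x` that is bad nowhere. -/

open Finset Function

section Counting

variable {ι α : Type*} [Fintype ι] [DecidableEq ι] [Fintype α]

theorem card_filter_mul_card_eq_sum_card_filter_update (P : (ι → α) → Prop) [DecidablePred P]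
    (j : ι) :
    #{x | P x} * Fintype.card α = ∑ x, #{a | P (update x j a)} := by
  have hinv : Involutive fun xa : (ι → α) × α => (update xa.1 j xa.2, xa.1 j) :=
    fun _ => by simp
  calc #{x | P x} * Fintype.card α = ∑ zb : (ι → α) × α, if P zb.1 then 1 else 0 := by
        rw [Fintype.sum_prod_type, card_filter, sum_mul]
        simp [mul_comm, apply_ite]
    _ = ∑ xa : (ι → α) × α, if P (update xa.1 j xa.2) then 1 else 0 :=
        (Fintype.sum_equiv (hinv.toPerm _) _ _ fun _ => rfl).symm
    _ = ∑ x, #{a | P (update x j a)} := by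
        rw [Fintype.sum_prod_type]
        simp [sum_boole]

theorem exists_forall_not_of_card_filter_update_mul_lt [Nonempty α]
    (Bad : ι → (ι → α) → Prop) [∀ j, DecidablePred (Bad j)]
    (h : ∀ j x, #{a | Bad j (update x j a)} * Fintype.card ι < Fintype.card α) :
    ∃ x, ∀ j, ¬ Bad j x := by
  classical
  rcases isEmpty_or_nonempty ι with hι | hι
  · exact ⟨isEmptyElim, isEmptyElim⟩
  have hBad : ∀ j, #{x | Bad j x} * Fintype.card ι < Fintype.card (ι → α) := by
    intro j
    refine lt_of_mul_lt_mul_right (a := Fintype.card α) ?_ (Nat.zero_le _)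
    calc #{x | Bad j x} * Fintype.card ι * Fintype.card α
        = ∑ x, #{a | Bad j (update x j a)} * Fintype.card ι := by
          rw [mul_right_comm, card_filter_mul_card_eq_sum_card_filter_update, Finset.sum_mul]
      _ < ∑ _x : ι → α, Fintype.card α :=
          sum_lt_sum_of_nonempty univ_nonempty fun x _ => h j x
      _ = Fintype.card (ι → α) * Fintype.card α := by simp
  by_contra! hcover
  have hle : Fintype.card (ι → α) ≤ ∑ j, #{x | Bad j x} :=
    calc Fintype.card (ι → α)
        = #(univ.biUnion fun j => ({x | Bad j x} : Finset (ι → α))) := by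
          rw [← card_univ]; congr 1; ext x; simpa using hcover x
      _ ≤ ∑ j, #{x | Bad j x} := card_biUnion_le
  have hlt :
      (∑ j, #{x | Bad j x}) * Fintype.card ι < Fintype.card (ι → α) * Fintype.card ι := by
    rw [sum_mul]
    simpa [mul_comm] using sum_lt_sum_of_nonempty univ_nonempty fun j (_ : j ∈ univ) => hBad j
  exact hlt.not_ge (Nat.mul_le_mul_right _ hle)

end Counting

theorem PMF.sum_toOuterMeasure_le_one_s11 {α ι : Type*} (p : PMF α) {S : ι → Set α}
    (hS : Pairwise (Disjoint on S)) (s : Finset ι) :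
    ∑ i ∈ s, p.toOuterMeasure (S i) ≤ 1 := by
  let _ : MeasurableSpace α := ⊤
  simp_rw [← p.toMeasure_apply_eq_toOuterMeasure]
  rw [← MeasureTheory.measure_biUnion_finset (hS.set_pairwise _)
    fun _ _ => MeasurableSpace.measurableSet_top]
  exact MeasureTheory.prob_le_one

theorem PMF.card_filter_lt_toOuterMeasure_mul_lt_one {α ι : Type*} [Fintype ι] (p : PMF α)
    {S : ι → Set α} (hS : Pairwise (Disjoint on S)) (β : ℝ≥0∞) :
    (#{i | β < p.toOuterMeasure (S i)} : ℝ≥0∞) * β < 1 := by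
  set T : Finset ι := {i | β < p.toOuterMeasure (S i)}
  rcases T.eq_empty_or_nonempty with hT | hT
  · simp [hT]
  calc (#T : ℝ≥0∞) * β = ∑ _i ∈ T, β := by rw [sum_const, nsmul_eq_mul]
    _ < ∑ i ∈ T, p.toOuterMeasure (S i) :=
        ENNReal.sum_lt_sum_of_nonempty hT fun i hi => (mem_filter.1 hi).2
    _ ≤ 1 := p.sum_toOuterMeasure_le_one_s11 hS T

theorem mul_lt_of_mul_lt_one_of_le_mul {k n m : ℕ} {β : ℝ≥0∞} (hk : k * β < 1)
    (hn : (n : ℝ≥0∞) ≤ m * β) (hm : m ≠ 0) : k * n < m := by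
  have : (k * n : ℝ≥0∞) < m :=
    calc (k : ℝ≥0∞) * n ≤ k * (m * β) := by gcongr
      _ = m * (k * β) := by ring
      _ < m * 1 := (ENNReal.mul_lt_mul_iff_right (by simpa) (ENNReal.natCast_ne_top m)).2 hk
      _ = m := mul_one _
  exact_mod_cast this

theorem scrub_ofFn_eq_map_filter_ne {W : Type*} {n : ℕ} (f : Fin n → W) (j : Fin n)
    (hf : ∀ k, f k = f j → k = j) :
    scrub (· = ·) (List.ofFn f) (f j) = ((List.finRange n).filter (· ≠ j)).map f := by
  rw [scrub, List.ofFn_eq_map, List.filter_map]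
  congr 1
  refine List.filter_congr fun k _ => ?_
  simp only [comp_apply, decide_eq_decide]
  exact ⟨fun h hkj => h (hkj ▸ rfl), fun h hfk => h (hf k hfk.symm)⟩

theorem scrub_ofFn_update {W : Type*} {m n : ℕ} {w : Fin m → Fin n → W}
    (hw : ∀ i i' j j', w i j = w i' j' → j = j') (x : Fin n → Fin m) (j : Fin n) (a : Fin m) :
    scrub (· = ·) (List.ofFn fun k => w (update x j a k) k) (w a j) =
      scrub (· = ·) (List.ofFn fun k => w (x k) k) (w (x j) j) := by
  have h := scrub_ofFn_eq_map_filter_ne (fun k => w (update x j a k) k) j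
    fun k hk => hw _ _ _ _ hk
  rw [update_self] at h
  rw [h, scrub_ofFn_eq_map_filter_ne _ j fun k hk => hw _ _ _ _ hk]
  refine List.map_congr_left fun k hk => ?_
  rw [update_of_ne (of_decide_eq_true (List.mem_filter.1 hk).2)]

theorem blameless_eq_self_iff {W X A : Type*} {β : ℝ≥0∞}
    {Train : List W → PMF (X → PMF W)} {u : (X → PMF W) → A → PMF W} {D : List W}
    {SubSim : W → Set W} :
    Blameless β Train u (· = ·) {v | v ∈ D} D SubSim ↔
      ∀ c ∈ D, ∀ aux,
        (tau Train u (scrub (· = ·) D c) aux).toOuterMeasure (SubSim c) ≤ β := by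
  have hCmD : CmD (· = ·) {v | v ∈ D} D = ∅ := by
    ext v; simp [CmD, CD]
  simp [Blameless, hCmD, SubSimSet]

theorem exists_blameless_dataset_general {W X A : Type*}
    (SubSim : W → Set W)
    (β : ℝ≥0∞) (hβ1 : β < 1)
    (n m : ℕ) (hn : 1 ≤ n) (hm : (n : ℝ≥0∞) / β ≤ (m : ℝ≥0∞))
    (w : Fin m → Fin n → W)
    (hwinj : Function.Injective fun q : Fin m × Fin n => w q.1 q.2)
    (hwdisj : ∀ (i i' : Fin m) (j : Fin n), i ≠ i' →
      SubSim (w i j) ∩ SubSim (w i' j) = ∅)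
    (u : (X → PMF W) → A → PMF W)
    (hu : ∀ (p : X → PMF W) (a a' : A), u p a = u p a')
    (Train : List W → PMF (X → PMF W)) :
    ∃ x : Fin n → Fin m,
      Blameless β Train u (fun a b => a = b)
        {v | v ∈ List.ofFn fun j => w (x j) j}
        (List.ofFn fun j => w (x j) j) SubSim := by
  classical
  have hn_le : (n : ℝ≥0∞) ≤ m * β :=
    (ENNReal.div_le_iff_le_mul (Or.inr (ENNReal.natCast_ne_top m)) (Or.inl hβ1.ne_top)).1 hm
  have hm0 : m ≠ 0 := by
    rintro rfl
    simp only [CharP.cast_eq_zero, zero_mul, nonpos_iff_eq_zero, Nat.cast_eq_zero] at hn_le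
    omega
  have : Nonempty (Fin m) := ⟨⟨0, Nat.pos_of_ne_zero hm0⟩⟩
  rcases isEmpty_or_nonempty A with hA | ⟨⟨aux₀⟩⟩
  · exact ⟨Classical.arbitrary _, fun _ _ aux => isEmptyElim aux⟩
  have hτ : ∀ D aux, tau Train u D aux = tau Train u D aux₀ := fun D aux => by
    simp only [tau, hu _ aux aux₀]
  have hcol : ∀ i i' j j', w i j = w i' j' → j = j' := fun i i' j j' h =>
    (Prod.ext_iff.1 (hwinj (a₁ := (i, j)) (a₂ := (i', j')) h)).2
  obtain ⟨x, hx⟩ := exists_forall_not_of_card_filter_update_mul_lt (fun j x =>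
      β < (tau Train u (scrub (· = ·) (List.ofFn fun k => w (x k) k) (w (x j) j))
        aux₀).toOuterMeasure (SubSim (w (x j) j))) fun j x => by
    simp only [update_self, scrub_ofFn_update hcol, Fintype.card_fin]
    exact mul_lt_of_mul_lt_one_of_le_mul (PMF.card_filter_lt_toOuterMeasure_mul_lt_one _
      (fun i i' h => Set.disjoint_iff_inter_eq_empty.2 (hwdisj i i' j h)) β) hn_le hm0
  refine ⟨x, blameless_eq_self_iff.2 fun c hc aux => ?_⟩
  obtain ⟨j, rfl⟩ := List.mem_ofFn.1 hc
  rw [hτ]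
  exact not_lt.1 (hx j)

/-- counting lemma: with `m ≥ n/β` and works `w i j` pairwise
distinct with columnwise-disjoint substantial-similarity sets, the copyright
dependency graph taken to be the identity relation, and a user `u` that ignores its
auxiliary input, for every training algorithm `Train` there is `x ∈ [m]^n` such that
`u` is `β`-blameless w.r.t. the dataset `D^(x) = (w_{x_1,1}, …, w_{x_n,n})`, the set
`C = D^(x)`, and `Train`. -/
theorem exists_blameless_dataset {W X A : Type*} [Countable W]
    (SubSim : W → Set W) (hrefl : ∀ v, v ∈ SubSim v)
    (β : ℝ≥0∞) (hβ0 : 0 < β) (hβ1 : β < 1)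
    (n m : ℕ) (hn : 1 ≤ n) (hm : (n : ℝ≥0∞) / β ≤ (m : ℝ≥0∞))
    (w : Fin m → Fin n → W)
    (hwinj : Function.Injective fun q : Fin m × Fin n => w q.1 q.2)
    (hwdisj : ∀ (i i' : Fin m) (j : Fin n), i ≠ i' →
      SubSim (w i j) ∩ SubSim (w i' j) = ∅)
    (u : (X → PMF W) → A → PMF W)
    (hu : ∀ (p : X → PMF W) (a a' : A), u p a = u p a')
    (Train : List W → PMF (X → PMF W)) :
    ∃ x : Fin n → Fin m,
      Blameless β Train u (fun a b => a = b)
        {v | v ∈ List.ofFn fun j => w (x j) j}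
        (List.ofFn fun j => w (x j) j) SubSim :=
  exists_blameless_dataset_general SubSim β hβ1 n m hn hm w hwinj hwdisj u hu Train
end

section
/- Let Train be an (ε,δ)-differentially private training algorithm with ε > 0 and δ ≥ 0. Fix a reflexive copyright dependency graph, a set C ⊆ W of in-copyright works, and a golden dataset D such that C_D is finite with N_D = |C_D| elements. Then for every β ≥ 0, every κ ≥ (e^ε · N_D + 1)·β + N_D·δ, every user u that is β-blameless with respect to D, C, Train, and every auxiliary input aux: τ(SubSim(C); aux) ≤ κ. That is, Train is (κ,β)-clean for golden datasets. -/
open scoped ENNReal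

/-!
Split `SubSim(C)` into `SubSim(C_{-D})` and the `N_D` sets `SubSim(c)`, `c ∈ C_D`. Scrubbing a
work of `C_{-D}` leaves `D` unchanged, so blamelessness bounds the mass of the first part by `β`.
For `c ∈ C_D`, goldenness makes `scrub(D, c)` a neighbour of `D`; differential privacy survives
the post-processing by the user, so `τ(SubSim(c)) ≤ e^ε τ_{-c}(SubSim(c)) + δ ≤ e^ε β + δ`.
A union bound gives `β + N_D (e^ε β + δ)`.
-/

open MeasureTheory Set

section PostProcessing

variable {α : Type*} [MeasurableSpace α] {μ ν : Measure α} {k d : ℝ≥0∞}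

/-- By the layer-cake formula both integrals are integrals over `t > 0` of the measures of the
superlevel sets `{t ≤ f}`, which the hypothesis compares; the slack `d` is only paid for
`t ≤ 1`, as higher levels are empty. -/
theorem lintegral_le_mul_lintegral_add_of_forall_measure_le
    (h : ∀ s, MeasurableSet s → μ s ≤ k * ν s + d) {f : α → ℝ≥0∞} (hf : Measurable f)
    (hf_le : ∀ a, f a ≤ 1) :
    ∫⁻ a, f a ∂μ ≤ k * ∫⁻ a, f a ∂ν + d := by
  set g : α → ℝ := fun a => (f a).toReal
  have hg : Measurable g := hf.ennreal_toReal
  have hg_le : ∀ a, g a ≤ 1 := fun a => by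
    simpa using ENNReal.toReal_mono ENNReal.one_ne_top (hf_le a)
  have layer_cake : ∀ ρ : Measure α, ∫⁻ a, f a ∂ρ = ∫⁻ t in Ioi 0, ρ {a | t ≤ g a} := by
    intro ρ
    have hfg : ∀ a, f a = ENNReal.ofReal (g a) := fun a =>
      (ENNReal.ofReal_toReal (ne_top_of_le_ne_top ENNReal.one_ne_top (hf_le a))).symm
    simp_rw [hfg]
    exact lintegral_eq_lintegral_meas_le ρ (ae_of_all _ fun a => ENNReal.toReal_nonneg)
      hg.aemeasurable
  have level :
      ∀ t, μ {a | t ≤ g a} ≤ k * ν {a | t ≤ g a} + (Iic 1).indicator (fun _ => d) t := by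
    intro t
    by_cases ht : t ≤ 1
    · rw [indicator_of_mem (mem_Iic.mpr ht)]
      exact h _ (measurableSet_le measurable_const hg)
    · have hempty : {a | t ≤ g a} = ∅ :=
        eq_empty_of_forall_notMem fun a ha => ht (le_trans ha (hg_le a))
      simp [hempty]
  have hν : Measurable fun t : ℝ => ν {a | t ≤ g a} :=
    Antitone.measurable fun s t hst => measure_mono fun a ha => le_trans hst ha
  rw [layer_cake μ, layer_cake ν]
  calc ∫⁻ t in Ioi 0, μ {a | t ≤ g a}
      ≤ ∫⁻ t in Ioi 0, (k * ν {a | t ≤ g a} + (Iic 1).indicator (fun _ => d) t) :=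
        lintegral_mono level
    _ = k * (∫⁻ t in Ioi 0, ν {a | t ≤ g a}) + d := by
        rw [lintegral_add_left (hν.const_mul k), lintegral_const_mul k hν,
          lintegral_indicator_const measurableSet_Iic, Measure.restrict_apply measurableSet_Iic,
          Iic_inter_Ioi, Real.volume_Ioc, sub_zero, ENNReal.ofReal_one, mul_one]

end PostProcessing

theorem PMF.lintegral_toMeasure_eq_tsum {α : Type*} [MeasurableSpace α]
    [MeasurableSingletonClass α] (p : PMF α) (f : α → ℝ≥0∞) :
    ∫⁻ a, f a ∂p.toMeasure = ∑' a, p a * f a := calc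
  ∫⁻ a, f a ∂p.toMeasure = ∫⁻ a in p.support, f a ∂p.toMeasure := by
    rw [p.restrict_toMeasure_support]
  _ = ∑' a : p.support, p a * f a := by
    rw [lintegral_countable f p.support_countable]
    exact tsum_congr fun a => by
      rw [p.toMeasure_apply_singleton _ (measurableSet_singleton _), mul_comm]
  _ = ∑' a, p a * f a :=
    tsum_subtype_eq_of_support_subset fun a ha =>
      (p.mem_support_iff a).mpr (left_ne_zero_of_mul ha)

theorem PMF.toOuterMeasure_bind_le_mul_add {α β : Type*} {P Q : PMF α} {k d : ℝ≥0∞}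
    (h : ∀ s, P.toOuterMeasure s ≤ k * Q.toOuterMeasure s + d) (f : α → PMF β) (s : Set β) :
    (P.bind f).toOuterMeasure s ≤ k * (Q.bind f).toOuterMeasure s + d := by
  let : MeasurableSpace α := ⊤
  have hbind : ∀ R : PMF α,
      (R.bind f).toOuterMeasure s = ∫⁻ a, (f a).toOuterMeasure s ∂(R.toMeasure) := fun R => by
    rw [PMF.toOuterMeasure_bind_apply, PMF.lintegral_toMeasure_eq_tsum]
  rw [hbind, hbind]
  refine lintegral_le_mul_lintegral_add_of_forall_measure_le (fun t ht => ?_) measurable_from_top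
    fun a => ?_
  · simpa only [PMF.toMeasure_apply_eq_toOuterMeasure_apply _ ht] using h t
  · exact (measure_mono (subset_univ s)).trans_eq
      ((f a).toOuterMeasure_apply_eq_one_iff _ |>.mpr (subset_univ _))

section Scrub

variable {W : Type*} {E : W → W → Prop} {C : Set W} {D : List W} {c : W}

theorem scrub_eq_self (h : ∀ w ∈ D, ¬ E c w) : scrub E D c = D :=
  List.filter_eq_self.mpr fun w hw => by simpa using h w hw

theorem Golden.not_stem_pair_of_sublist (hD : Golden E C D) (hc : c ∈ C) {a b : W}
    (hab : [a, b].Sublist D) : ¬ (E c a ∧ E c b) := by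
  rintro ⟨ha, hb⟩
  obtain ⟨f, hf⟩ := List.sublist_iff_exists_fin_orderEmbedding_get_eq.mp hab
  have hidx := hD c hc (f ⟨0, by simp⟩) (f ⟨1, by simp⟩)
    (by rw [← hf]; exact ha) (by rw [← hf]; exact hb)
  exact absurd (f.injective hidx) (by simp)

theorem Golden.scrub_eq (hD : Golden E C D) (hc : c ∈ C) {l₁ l₂ : List W} {w : W}
    (hDw : D = l₁ ++ w :: l₂) (hw : E c w) : scrub E D c = l₁ ++ l₂ := by
  subst hDw
  have h₁ : ∀ x ∈ l₁, ¬ E c x := fun x hx hx' =>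
    hD.not_stem_pair_of_sublist hc ((List.singleton_sublist.mpr hx).append
      (List.singleton_sublist.mpr List.mem_cons_self)) ⟨hx', hw⟩
  have h₂ : ∀ x ∈ l₂, ¬ E c x := fun x hx hx' =>
    hD.not_stem_pair_of_sublist hc (List.sublist_append_of_sublist_right
      (List.cons_sublist_cons.mpr (List.singleton_sublist.mpr hx))) ⟨hw, hx'⟩
  rw [scrub, List.filter_append, List.filter_cons_of_neg (by simpa using hw)]
  exact congrArg₂ (· ++ ·) (scrub_eq_self h₁) (scrub_eq_self h₂)

theorem Golden.neighboring_scrub (hD : Golden E C D) (hc : c ∈ CD E C D) :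
    Neighboring D (scrub E D c) := by
  obtain ⟨hcC, w, hw, hcw⟩ := hc
  obtain ⟨l₁, l₂, hDw⟩ := List.append_of_mem hw
  exact Or.inr ⟨l₁, l₂, w, hD.scrub_eq hcC hDw hcw, hDw⟩

end Scrub

theorem subSimSet_eq_CmD_union_CD {W : Type*} (SubSim : W → Set W) (E : W → W → Prop) (C : Set W)
    (D : List W) :
    SubSimSet SubSim C = SubSimSet SubSim (CmD E C D) ∪ SubSimSet SubSim (CD E C D) := by
  rw [SubSimSet, SubSimSet, SubSimSet, ← biUnion_union, CmD,
    sdiff_union_of_subset (show CD E C D ⊆ C from sep_subset _ _)]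

section CleanRoom

variable {W X A : Type*} {Train : List W → PMF (X → PMF W)} {u : (X → PMF W) → A → PMF W}
  {E : W → W → Prop} {C : Set W} {D : List W} {SubSim : W → Set W} {β : ℝ≥0∞}

/-- A work `c` of `C_{-D}` is scrubbed from nothing, so the clean-room distribution `τ_{-c}` is
`τ` itself. -/
theorem Blameless.tau_subSimSet_CmD_le (hb : Blameless β Train u E C D SubSim) (aux : A) :
    (tau Train u D aux).toOuterMeasure (SubSimSet SubSim (CmD E C D)) ≤ β := by
  rcases (CmD E C D).eq_empty_or_nonempty with hempty | ⟨c, hcC, hcD⟩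
  · simp [SubSimSet, hempty]
  · have hscrub : scrub E D c = D := scrub_eq_self fun w hw hcw => hcD ⟨hcC, w, hw, hcw⟩
    have hbc := hb c hcC aux
    rw [hscrub] at hbc
    exact (measure_mono (biUnion_subset_biUnion_left subset_union_left)).trans hbc

theorem tau_subSim_le_of_mem_CD {ε : ℝ} {δ : ℝ≥0∞} (hDP : DP Train ε δ) (hD : Golden E C D)
    (hb : Blameless β Train u E C D SubSim) {c : W} (hc : c ∈ CD E C D) (aux : A) :
    (tau Train u D aux).toOuterMeasure (SubSim c) ≤ ENNReal.ofReal (Real.exp ε) * β + δ :=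
  calc (tau Train u D aux).toOuterMeasure (SubSim c)
      ≤ ENNReal.ofReal (Real.exp ε) * (tau Train u (scrub E D c) aux).toOuterMeasure (SubSim c)
          + δ :=
        PMF.toOuterMeasure_bind_le_mul_add (hDP _ _ (hD.neighboring_scrub hc)) _ _
    _ ≤ ENNReal.ofReal (Real.exp ε) * β + δ := by
        gcongr
        exact (measure_mono (subset_biUnion_of_mem (u := SubSim)
          (mem_union_right _ (mem_singleton c)))).trans (hb c hc.1 aux)

end CleanRoom

theorem dp_implies_clean_general {W X A : Type*}
    (Eg : W → W → Prop)
    (SubSim : W → Set W)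
    (C : Set W) (D : List W)
    (Train : List W → PMF (X → PMF W))
    (ε : ℝ) (δ : ℝ≥0∞)
    (hDP : DP Train ε δ)
    (hgolden : Golden Eg C D)
    (hfin : (CD Eg C D).Finite)
    (β κ : ℝ≥0∞)
    (hκ : (ENNReal.ofReal (Real.exp ε) * (hfin.toFinset.card : ℝ≥0∞) + 1) * β
            + (hfin.toFinset.card : ℝ≥0∞) * δ ≤ κ)
    (u : (X → PMF W) → A → PMF W)
    (hblameless : Blameless β Train u Eg C D SubSim)
    (aux : A) :
    (tau Train u D aux).toOuterMeasure (SubSimSet SubSim C) ≤ κ := by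
  set τ := (tau Train u D aux).toOuterMeasure
  have hstem : ∀ c ∈ hfin.toFinset, τ (SubSim c) ≤ ENNReal.ofReal (Real.exp ε) * β + δ :=
    fun c hc => tau_subSim_le_of_mem_CD hDP hgolden hblameless (hfin.mem_toFinset.mp hc) aux
  calc τ (SubSimSet SubSim C)
      ≤ τ (SubSimSet SubSim (CmD Eg C D)) + ∑ c ∈ hfin.toFinset, τ (SubSim c) := by
        have hCD := measure_biUnion_finset_le (μ := τ) hfin.toFinset SubSim
        simp only [Set.Finite.mem_toFinset] at hCD
        rw [subSimSet_eq_CmD_union_CD SubSim Eg C D]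
        exact (measure_union_le _ _).trans (add_le_add_right hCD _)
    _ ≤ β + ∑ c ∈ hfin.toFinset, (ENNReal.ofReal (Real.exp ε) * β + δ) :=
        add_le_add (hblameless.tau_subSimSet_CmD_le aux) (Finset.sum_le_sum hstem)
    _ = (ENNReal.ofReal (Real.exp ε) * (hfin.toFinset.card : ℝ≥0∞) + 1) * β
          + (hfin.toFinset.card : ℝ≥0∞) * δ := by
        rw [Finset.sum_const, nsmul_eq_mul]
        ring
    _ ≤ κ := hκ

/-- DP implies clean-room copy protection on golden data: let
`Train` be `(ε,δ)`-DP with `ε > 0`, fix a reflexive dependency graph, in-copyright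
works `C`, and a golden dataset `D` with `N_D = |C_D|` finite.  Then for every
`β ≥ 0`, every `κ ≥ (e^ε·N_D + 1)·β + N_D·δ`, every `β`-blameless user `u`, and every
`aux`: `τ(SubSim(C); aux) ≤ κ`. -/
theorem dp_implies_clean {W X A : Type*} [Countable W]
    (Eg : W → W → Prop) (hErefl : ∀ v, Eg v v)
    (SubSim : W → Set W) (hSrefl : ∀ v, v ∈ SubSim v)
    (C : Set W) (D : List W)
    (Train : List W → PMF (X → PMF W))
    (ε : ℝ) (hε : 0 < ε) (δ : ℝ≥0∞)
    (hDP : DP Train ε δ)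
    (hgolden : Golden Eg C D)
    (hfin : (CD Eg C D).Finite)
    (β κ : ℝ≥0∞)
    (hκ : (ENNReal.ofReal (Real.exp ε) * (hfin.toFinset.card : ℝ≥0∞) + 1) * β
            + (hfin.toFinset.card : ℝ≥0∞) * δ ≤ κ)
    (u : (X → PMF W) → A → PMF W)
    (hblameless : Blameless β Train u Eg C D SubSim)
    (aux : A) :
    (tau Train u D aux).toOuterMeasure (SubSimSet SubSim C) ≤ κ :=
  dp_implies_clean_general Eg SubSim C D Train ε δ hDP hgolden hfin β κ hκ u hblameless aux
end
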